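/- Let A ⊂ L^∞ be a norm-closed conic acceptance set, S an eligible asset, and define ρ(X_T) = inf{ m ∈ ℝ : X_T + (m/S_0)S_T ∈ A }, assumed finite. Then for every position X with X_0 > 0, R_{A,S}(X) = (ρ(X_T))^+ / (X_0 + (ρ(X_T))^+), where t^+ = max(t,0). Consequently, R_{A,S} is scale-invariant: R_{A,S}(αX_0, αX_T) = R_{A,S}(X_0, X_T) for all α > 0. -/

import Mathlib

open MeasureTheory

/-- The set of percentages making the combined position acceptable. -/
def IRset {Ω : Type*} [MeasurableSpace Ω] {μ : Measure Ω}
    (A : Set (Lp ℝ ⊤ μ)) (S0 X0 : ℝ) (ST XT : Lp ℝ ⊤ μ) : Set ℝ :=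
  {l : ℝ | l ∈ Set.Icc (0 : ℝ) 1 ∧ (1 - l) • XT + l • ((X0 / S0) • ST) ∈ A}

/-- The intrinsic risk measure. -/
noncomputable def IR {Ω : Type*} [MeasurableSpace Ω] {μ : Measure Ω}
    (A : Set (Lp ℝ ⊤ μ)) (S0 X0 : ℝ) (ST XT : Lp ℝ ⊤ μ) : ℝ :=
  sInf (IRset A S0 X0 ST XT)

/-- The traditional risk measure with eligible asset `S = (S0, ST)`. -/
noncomputable def rhoS {Ω : Type*} [MeasurableSpace Ω] {μ : Measure Ω}
    (A : Set (Lp ℝ ⊤ μ)) (S0 : ℝ) (ST XT : Lp ℝ ⊤ μ) : ℝ :=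
  sInf {m : ℝ | XT + (m / S0) • ST ∈ A}

theorem stmt17 {Ω : Type*} [MeasurableSpace Ω] (μ : Measure Ω) [IsProbabilityMeasure μ]
    (A : Set (Lp ℝ ⊤ μ)) (hne : A.Nonempty) (hproper : A ≠ Set.univ)
    (hmono : ∀ X ∈ A, ∀ Y : Lp ℝ ⊤ μ, X ≤ Y → Y ∈ A) (hclosed : IsClosed A)
    (hcone : ∀ Z ∈ A, ∀ c : ℝ, 0 < c → c • Z ∈ A)
    (S0 : ℝ) (hS0 : 0 < S0) (ST : Lp ℝ ⊤ μ) (hSA : ST ∈ A) (hST : 0 ≤ ST)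
    (hfin : ∀ Z : Lp ℝ ⊤ μ, {m : ℝ | Z + (m / S0) • ST ∈ A}.Nonempty ∧
      BddBelow {m : ℝ | Z + (m / S0) • ST ∈ A})
    (X0 : ℝ) (hX0 : 0 < X0) (XT : Lp ℝ ⊤ μ) :
    IR A S0 X0 ST XT =
      max (rhoS A S0 ST XT) 0 / (X0 + max (rhoS A S0 ST XT) 0) ∧
    ∀ a : ℝ, 0 < a → IR A S0 (a * X0) ST (a • XT) = IR A S0 X0 ST XT := by
  have hconeIff : ∀ (Z : Lp ℝ ⊤ μ) (c : ℝ), 0 < c → (c • Z ∈ A ↔ Z ∈ A) := by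
    intro Z c hc
    constructor
    · intro h
      have h2 := hcone _ h c⁻¹ (by positivity)
      rwa [inv_smul_smul₀ hc.ne'] at h2
    · intro h; exact hcone _ h c hc
  -- smul of nonneg scalar on nonneg element is nonneg
  have hsmul_nonneg : ∀ (c : ℝ), 0 ≤ c → 0 ≤ c • ST := by
    intro c hc
    rw [← MeasureTheory.Lp.coeFn_nonneg] at hST ⊢
    filter_upwards [hST, MeasureTheory.Lp.coeFn_smul c ST] with ω h1 h2
    rw [h2, Pi.smul_apply, smul_eq_mul]
    exact mul_nonneg hc h1
  -- the capital requirement set is upward closed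
  have hup : ∀ (Z : Lp ℝ ⊤ μ) (m m' : ℝ), m ≤ m' →
      Z + (m / S0) • ST ∈ A → Z + (m' / S0) • ST ∈ A := by
    intro Z m m' hmm' hmem
    have hkey : Z + (m' / S0) • ST = (Z + (m / S0) • ST) + ((m' - m) / S0) • ST := by
      module
    rw [hkey]
    exact hmono _ hmem _ (le_add_of_nonneg_right (hsmul_nonneg _ (div_nonneg (by linarith) hS0.le)))
  set ρ := rhoS A S0 ST XT with hρdef
  have hMclosed : IsClosed {m : ℝ | XT + (m / S0) • ST ∈ A} := by
    have hcont : Continuous fun m : ℝ => XT + (m / S0) • ST := by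
      exact continuous_const.add (((continuous_id.div_const S0)).smul continuous_const)
    exact hclosed.preimage hcont
  have hρmem : XT + (ρ / S0) • ST ∈ A :=
    hMclosed.csInf_mem (hfin XT).1 (hfin XT).2
  set r := max ρ 0 with hrdef
  have hr0 : 0 ≤ r := le_max_right _ _
  have hXr : 0 < X0 + r := by linarith
  set l₀ := r / (X0 + r) with hl₀def
  have hl₀0 : 0 ≤ l₀ := div_nonneg hr0 hXr.le
  have hl₀1 : l₀ ≤ 1 := by rw [div_le_one hXr]; linarith
  -- characterization of IRset
  have hiff : ∀ l : ℝ, l < 1 →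
      ((1 - l) • XT + l • ((X0 / S0) • ST) ∈ A ↔ XT + ((l * X0 / (1 - l)) / S0) • ST ∈ A) := by
    intro l hl
    have h1l : (0:ℝ) < 1 - l := by linarith
    have hkey : (1 - l) • (XT + ((l * X0 / (1 - l)) / S0) • ST)
        = (1 - l) • XT + l • ((X0 / S0) • ST) := by
      rw [smul_add, smul_smul, smul_smul]
      congr 1
      congr 1
      field_simp
    rw [← hkey]
    exact (hconeIff _ _ h1l)
  have hset : IRset A S0 X0 ST XT = Set.Icc l₀ 1 := by
    ext l
    constructor
    · rintro ⟨⟨hl0, hl1⟩, hmem⟩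
      refine ⟨?_, hl1⟩
      rcases eq_or_lt_of_le hl1 with h | h
      · rw [h]; exact hl₀1
      · have hm := (hiff l h).mp hmem
        have h1l : (0:ℝ) < 1 - l := by linarith
        have hge : ρ ≤ l * X0 / (1 - l) := csInf_le (hfin XT).2 hm
        have hge0 : 0 ≤ l * X0 / (1 - l) := by positivity
        have hger : r ≤ l * X0 / (1 - l) := max_le hge hge0
        rw [div_le_iff₀ hXr]
        rw [le_div_iff₀ h1l] at hger
        nlinarith
    · rintro ⟨hl0', hl1⟩
      have hl0 : 0 ≤ l := le_trans hl₀0 hl0'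
      refine ⟨⟨hl0, hl1⟩, ?_⟩
      rcases eq_or_lt_of_le hl1 with h | h
      · rw [h]
        simp only [sub_self, zero_smul, one_smul, zero_add]
        exact hcone _ hSA _ (by positivity)
      · rw [hiff l h]
        have h1l : (0:ℝ) < 1 - l := by linarith
        have hρr : ρ ≤ r := le_max_left _ _
        have : r ≤ l * X0 / (1 - l) := by
          rw [le_div_iff₀ h1l]
          rw [div_le_iff₀ hXr] at hl0'
          nlinarith
        exact hup XT ρ _ (le_trans hρr this) hρmem
  constructor
  · rw [IR, hset, csInf_Icc hl₀1]
  · intro a ha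
    have hsets : IRset A S0 (a * X0) ST (a • XT) = IRset A S0 X0 ST XT := by
      ext l
      have hkey : (1 - l) • (a • XT) + l • ((a * X0 / S0) • ST)
          = a • ((1 - l) • XT + l • ((X0 / S0) • ST)) := by
        match_scalars <;> field_simp <;> ring
      simp only [IRset, Set.mem_setOf_eq, hkey, hconeIff _ a ha]
    rw [IR, IR, hsets]
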